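/- If a, b ∈ [0,1] satisfy b ≥ f_∞(a)² where f_∞(z) = √(1 - (2/√3)√z) for z ∈ [0,1/3] and f_∞(z) = (√3/2)(1-z) for z ∈ [1/3,1], then max(a, b) ≥ 1/3. -/

import Mathlib

open Real

lemma two_div_sqrt_three_mul_sqrt_le {z : ℝ} (hz : z ≤ 1 / 3) : 2 / √3 * √z ≤ 2 / 3 :=
  calc 2 / √3 * √z ≤ 2 / √3 * √(1 / 3) := by gcongr
    _ = 2 / 3 := by
      rw [one_div, sqrt_inv, ← div_eq_mul_inv, div_div, mul_self_sqrt zero_le_three]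

theorem stmt_8_general (f : ℝ → ℝ)
    (hf : ∀ z, f z = if z ≤ 1 / 3 then Real.sqrt (1 - (2 / Real.sqrt 3) * Real.sqrt z)
                     else (Real.sqrt 3 / 2) * (1 - z))
    (a b : ℝ)
    (h : (f a) ^ 2 ≤ b) :
    1 / 3 ≤ max a b := by
  by_cases ha : a ≤ 1 / 3
  · have hsqrt := two_div_sqrt_three_mul_sqrt_le ha
    rw [hf a, if_pos ha, sq_sqrt (by linarith)] at h
    exact le_max_of_le_right (by linarith)
  · exact le_max_of_le_left (not_le.mp ha).le

theorem stmt_8 (f : ℝ → ℝ)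
    (hf : ∀ z, f z = if z ≤ 1 / 3 then Real.sqrt (1 - (2 / Real.sqrt 3) * Real.sqrt z)
                     else (Real.sqrt 3 / 2) * (1 - z))
    (a b : ℝ) (ha : a ∈ Set.Icc (0:ℝ) 1) (hb : b ∈ Set.Icc (0:ℝ) 1)
    (h : (f a) ^ 2 ≤ b) :
    1 / 3 ≤ max a b :=
  stmt_8_general f hf a b h
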